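/- There exists a real constant c ≠ 0, independent of k and l, such that for all k, l ∈ ℤ²₊ the vector field b(e_k⁰, e_l¹) − b(e_l¹, e_k⁰) − b(e_l⁰, e_k¹) + b(e_k¹, e_l⁰) equals a(k,l) · c · |k+l| · e⁰_{k+l} modulo a gradient. (This is the second identity of the magnetic-direction Lie bracket lemma: Z_{k,l}^{0,1} − Z_{l,k}^{0,1} = a c |k+l| σ⁰_{k+l}.) -/

import Mathlib

/-- Euclidean norm of an integer lattice vector `k ∈ ℤ²`. -/
noncomputable def knorm (k : ℤ × ℤ) : ℝ := Real.sqrt ((k.1 : ℝ) ^ 2 + (k.2 : ℝ) ^ 2)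

/-- The phase `k ⋅ x = k₁ x₁ + k₂ x₂`. -/
noncomputable def phase (k : ℤ × ℤ) (x : ℝ × ℝ) : ℝ := (k.1 : ℝ) * x.1 + (k.2 : ℝ) * x.2

/-- The divergence-free trigonometric vector field
`e_k⁰(x) = |k|⁻¹ (k₂, −k₁) cos(k ⋅ x)`. -/
noncomputable def e0 (k : ℤ × ℤ) (x : ℝ × ℝ) : ℝ × ℝ :=
  (((k.2 : ℝ) / knorm k) * Real.cos (phase k x),
   ((-(k.1 : ℝ)) / knorm k) * Real.cos (phase k x))

/-- The divergence-free trigonometric vector field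
`e_k¹(x) = |k|⁻¹ (−k₂, k₁) sin(k ⋅ x)`. -/
noncomputable def e1 (k : ℤ × ℤ) (x : ℝ × ℝ) : ℝ × ℝ :=
  (((-(k.2 : ℝ)) / knorm k) * Real.sin (phase k x),
   ((k.1 : ℝ) / knorm k) * Real.sin (phase k x))

/-- The advection operator `b(u,v) = (u ⋅ ∇)v`, i.e. the derivative of `v`
in the direction `u(x)`. -/
noncomputable def advect (u v : ℝ × ℝ → ℝ × ℝ) (x : ℝ × ℝ) : ℝ × ℝ :=
  fderiv ℝ v x (u x)

/-- The coefficient `a(k,l) = ⟨k, l^⊥⟩ / (|k| |l|)` with `l^⊥ = (−l₂, l₁)`. -/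
noncomputable def acoef (k l : ℤ × ℤ) : ℝ :=
  ((k.1 : ℝ) * (-(l.2 : ℝ)) + (k.2 : ℝ) * (l.1 : ℝ)) / (knorm k * knorm l)

/-- The half lattice `ℤ²₊ = {j ∈ ℤ² \ {0} : j₁ > 0, or j₁ = 0 and j₂ > 0}`. -/
def Zpos : Set (ℤ × ℤ) := {j | 0 < j.1 ∨ (j.1 = 0 ∧ 0 < j.2)}

/-- `F` equals `G` modulo a gradient: there exists a smooth `2π`-periodic
function `p : ℝ² → ℝ` with `F = G + ∇p`. -/
def EqModGrad (F G : ℝ × ℝ → ℝ × ℝ) : Prop :=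
  ∃ p : ℝ × ℝ → ℝ, ContDiff ℝ (⊤ : ℕ∞) p ∧
    (∀ x : ℝ × ℝ, p (x.1 + 2 * Real.pi, x.2) = p x ∧ p (x.1, x.2 + 2 * Real.pi) = p x) ∧
    ∀ x : ℝ × ℝ, F x = G x + (fderiv ℝ p x (1, 0), fderiv ℝ p x (0, 1))

noncomputable def lmap (k : ℤ × ℤ) : (ℝ × ℝ) →L[ℝ] ℝ :=
  (k.1 : ℝ) • ContinuousLinearMap.fst ℝ ℝ ℝ + (k.2 : ℝ) • ContinuousLinearMap.snd ℝ ℝ ℝ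

lemma lmap_apply (k : ℤ × ℤ) (v : ℝ × ℝ) : lmap k v = (k.1 : ℝ) * v.1 + (k.2 : ℝ) * v.2 := by
  simp [lmap]

lemma hasFDerivAt_phase (k : ℤ × ℤ) (x : ℝ × ℝ) : HasFDerivAt (phase k) (lmap k) x := by
  have h1 : HasFDerivAt (fun y : ℝ × ℝ => y.1) (ContinuousLinearMap.fst ℝ ℝ ℝ) x := hasFDerivAt_fst
  have h2 : HasFDerivAt (fun y : ℝ × ℝ => y.2) (ContinuousLinearMap.snd ℝ ℝ ℝ) x := hasFDerivAt_snd
  exact (h1.const_mul ((k.1:ℝ))).add (h2.const_mul ((k.2:ℝ)))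

lemma hasFDerivAt_cos_phase (c : ℝ) (k : ℤ × ℤ) (x : ℝ × ℝ) :
    HasFDerivAt (fun x => c * Real.cos (phase k x))
      (-((c * Real.sin (phase k x)) • lmap k)) x := by
  have h := ((Real.hasDerivAt_cos (phase k x)).comp_hasFDerivAt x (hasFDerivAt_phase k x)).const_mul c
  simpa [smul_smul, mul_neg] using h

lemma hasFDerivAt_sin_phase (c : ℝ) (k : ℤ × ℤ) (x : ℝ × ℝ) :
    HasFDerivAt (fun x => c * Real.sin (phase k x))
      ((c * Real.cos (phase k x)) • lmap k) x := by
  have h := ((Real.hasDerivAt_sin (phase k x)).comp_hasFDerivAt x (hasFDerivAt_phase k x)).const_mul c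
  simpa [smul_smul] using h

lemma hasFDerivAt_e0 (k : ℤ × ℤ) (x : ℝ × ℝ) :
    HasFDerivAt (e0 k)
      ((-((((k.2 : ℝ) / knorm k) * Real.sin (phase k x)) • lmap k)).prod
       (-(((-(k.1 : ℝ) / knorm k) * Real.sin (phase k x)) • lmap k))) x :=
  (hasFDerivAt_cos_phase _ k x).prodMk (hasFDerivAt_cos_phase _ k x)

lemma hasFDerivAt_e1 (k : ℤ × ℤ) (x : ℝ × ℝ) :
    HasFDerivAt (e1 k)
      (((((-(k.2 : ℝ)) / knorm k) * Real.cos (phase k x)) • lmap k).prod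
       ((((k.1 : ℝ) / knorm k) * Real.cos (phase k x)) • lmap k)) x :=
  (hasFDerivAt_sin_phase _ k x).prodMk (hasFDerivAt_sin_phase _ k x)

lemma advect_to_e0 (u : ℝ × ℝ → ℝ × ℝ) (k : ℤ × ℤ) (x : ℝ × ℝ) :
    advect u (e0 k) x =
      (-((((k.2 : ℝ) / knorm k) * Real.sin (phase k x)) * ((k.1 : ℝ) * (u x).1 + (k.2 : ℝ) * (u x).2)),
       -(((-(k.1 : ℝ) / knorm k) * Real.sin (phase k x)) * ((k.1 : ℝ) * (u x).1 + (k.2 : ℝ) * (u x).2))) := by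
  rw [advect, (hasFDerivAt_e0 k x).fderiv]
  simp [ContinuousLinearMap.prod_apply, lmap_apply]

lemma advect_to_e1 (u : ℝ × ℝ → ℝ × ℝ) (k : ℤ × ℤ) (x : ℝ × ℝ) :
    advect u (e1 k) x =
      (((-(k.2 : ℝ)) / knorm k) * Real.cos (phase k x) * ((k.1 : ℝ) * (u x).1 + (k.2 : ℝ) * (u x).2),
       ((k.1 : ℝ) / knorm k) * Real.cos (phase k x) * ((k.1 : ℝ) * (u x).1 + (k.2 : ℝ) * (u x).2)) := by
  rw [advect, (hasFDerivAt_e1 k x).fderiv]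
  simp [ContinuousLinearMap.prod_apply, lmap_apply]

lemma knorm_ne_zero {j : ℤ × ℤ} (hj : j ≠ 0) : knorm j ≠ 0 := by
  have h : (0:ℝ) < (j.1 : ℝ) ^ 2 + (j.2 : ℝ) ^ 2 := by
    rcases Prod.mk.injEq j.1 j.2 0 0 ▸ (fun h => hj (Prod.ext_iff.2 h)) with _
    have : j.1 ≠ 0 ∨ j.2 ≠ 0 := by
      by_contra hc
      push_neg at hc
      exact hj (Prod.ext_iff.2 ⟨hc.1, hc.2⟩)
    rcases this with h1 | h2
    · have hc : ((j.1 : ℝ)) ≠ 0 := Int.cast_ne_zero.mpr h1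
      have : (0:ℝ) < (j.1 : ℝ) ^ 2 := by positivity
      nlinarith [sq_nonneg ((j.2 : ℝ))]
    · have hc : ((j.2 : ℝ)) ≠ 0 := Int.cast_ne_zero.mpr h2
      have : (0:ℝ) < (j.2 : ℝ) ^ 2 := by positivity
      nlinarith [sq_nonneg ((j.1 : ℝ))]
  exact ne_of_gt (Real.sqrt_pos.mpr h)

lemma Zpos_ne_zero {j : ℤ × ℤ} (hj : j ∈ Zpos) : j ≠ 0 := by
  rcases hj with h | ⟨h1, h2⟩
  · intro he; rw [he] at h; exact lt_irrefl 0 h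
  · intro he; rw [he] at h2; exact lt_irrefl 0 h2

lemma Zpos_add_ne_zero {k l : ℤ × ℤ} (hk : k ∈ Zpos) (hl : l ∈ Zpos) : k + l ≠ 0 := by
  have h1 : 0 ≤ k.1 := by rcases hk with h | ⟨h, _⟩ <;> omega
  have h2 : 0 ≤ l.1 := by rcases hl with h | ⟨h, _⟩ <;> omega
  intro he
  have e1 : k.1 + l.1 = 0 := congrArg Prod.fst he
  have e2 : k.2 + l.2 = 0 := congrArg Prod.snd he
  have : k.1 = 0 ∧ l.1 = 0 := by omega
  rcases hk with h | ⟨_, hk2⟩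
  · omega
  rcases hl with h | ⟨_, hl2⟩
  · omega
  omega

theorem magnetic_lie_bracket_sum_minus :
    ∃ c : ℝ, c ≠ 0 ∧ ∀ k l : ℤ × ℤ, k ∈ Zpos → l ∈ Zpos →
      EqModGrad
        (fun x => advect (e0 k) (e1 l) x - advect (e1 l) (e0 k) x - advect (e0 l) (e1 k) x + advect (e1 k) (e0 l) x)
        (fun x => (acoef k l * c * (knorm (k + l))) • e0 (k + l) x) := by
  refine ⟨-1, by norm_num, fun k l hk hl => ?_⟩
  have hknz : knorm k ≠ 0 := knorm_ne_zero (Zpos_ne_zero hk)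
  have hlnz : knorm l ≠ 0 := knorm_ne_zero (Zpos_ne_zero hl)
  have hklnz : knorm (k + l) ≠ 0 := knorm_ne_zero (Zpos_add_ne_zero hk hl)
  refine ⟨fun _ => 0, contDiff_const, fun x => ⟨rfl, rfl⟩, fun x => ?_⟩
  have hz : fderiv ℝ (fun _ : ℝ × ℝ => (0:ℝ)) x = 0 := fderiv_const_apply 0
  rw [hz]
  simp only [ContinuousLinearMap.zero_apply]
  rw [advect_to_e1 (e0 k) l x, advect_to_e0 (e1 l) k x, advect_to_e1 (e0 l) k x,
      advect_to_e0 (e1 k) l x]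
  have hph : phase (k + l) x = phase k x + phase l x := by
    simp only [phase, Prod.fst_add, Prod.snd_add, Int.cast_add]; ring
  have hca := Real.cos_add (phase k x) (phase l x)
  apply Prod.ext
  · simp only [e0, e1, acoef, Prod.fst_add, Prod.snd_add, Prod.smul_fst, Prod.smul_snd,
      smul_eq_mul, hph, hca, Int.cast_add, Prod.mk_add_mk, Prod.mk_sub_mk, Prod.fst, Prod.snd]
    field_simp
    ring
  · simp only [e0, e1, acoef, Prod.fst_add, Prod.snd_add, Prod.smul_fst, Prod.smul_snd,
      smul_eq_mul, hph, hca, Int.cast_add, Prod.mk_add_mk, Prod.mk_sub_mk, Prod.fst, Prod.snd]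
    field_simp
    ring
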